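/- Each of the three maps Z₁(x,y) = ((1−x²−y²)/(x²+(y+1)²), 2x/(x²+(y+1)²)), Z₂(x,y) = ((2x²−2(y+1)²)/(x²+(y+1)²)², −4x(y+1)/(x²+(y+1)²)²), Z₃(x,y) = (2x(x²+y²−1)/(x²+(y+1)²)², −(2y(y+1)²+2x²(2+y))/(x²+(y+1)²)²) is harmonic on the open upper half-plane ℝ²₊ = ℝ×(0,∞): ΔZ_i = 0 on ℝ²₊ for i = 1, 2, 3. -/

import Mathlib

/-!
As `(Re, Im)` pairs, `Z₁`, `Z₂`, `Z₃` are the functions `(i - z)/(z + i)`, `2/(z + i)²` and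
`2z/(z + i)²` of `z = x + iy`, which are holomorphic away from `z = -i`. For a holomorphic `f`,
the second derivative along a horizontal line is `f''` and along a vertical line `i² f''`, so the
Laplacian of any real-linear image of `f` vanishes.
-/

noncomputable section

/-- Harmonic extension of the first kernel element. -/
def Z1 (x y : ℝ) : ℝ × ℝ :=
  ((1 - x ^ 2 - y ^ 2) / (x ^ 2 + (y + 1) ^ 2), 2 * x / (x ^ 2 + (y + 1) ^ 2))

/-- Harmonic extension of the second kernel element. -/
def Z2 (x y : ℝ) : ℝ × ℝ :=
  ((2 * x ^ 2 - 2 * (y + 1) ^ 2) / (x ^ 2 + (y + 1) ^ 2) ^ 2,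
    -(4 * x * (y + 1)) / (x ^ 2 + (y + 1) ^ 2) ^ 2)

/-- Harmonic extension of the third kernel element. -/
def Z3 (x y : ℝ) : ℝ × ℝ :=
  (2 * x * (x ^ 2 + y ^ 2 - 1) / (x ^ 2 + (y + 1) ^ 2) ^ 2,
    -(2 * y * (y + 1) ^ 2 + 2 * x ^ 2 * (2 + y)) / (x ^ 2 + (y + 1) ^ 2) ^ 2)

/-- The Laplacian of a map `f : ℝ → ℝ → ℝ × ℝ` in the variables `(x, y)`. -/
def lap (f : ℝ → ℝ → ℝ × ℝ) (x y : ℝ) : ℝ × ℝ :=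
  deriv (fun x' => deriv (fun x'' => f x'' y) x') x +
    deriv (fun y' => deriv (fun y'' => f x y'') y') y


open Complex Filter Topology

section Line

variable {F : Type*} [NormedAddCommGroup F] [NormedSpace ℝ F] (L : ℂ →L[ℝ] F)
  {f : ℂ → ℂ} {U : Set ℂ}

lemma hasDerivAt_clm_comp_line {f' c v : ℂ} {t : ℝ} (hf : HasDerivAt f f' (c + t * v)) :
    HasDerivAt (fun r : ℝ => L (f (c + r * v))) (L (f' * v)) t := by
  have hline : HasDerivAt (fun r : ℝ => c + r * v) v t := by
    simpa using ((hasDerivAt_id t).ofReal_comp.mul_const v).const_add c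
  exact L.hasFDerivAt.comp_hasDerivAt t (hf.comp t hline)

lemma deriv_deriv_clm_comp_line (hU : IsOpen U) (hf : DifferentiableOn ℂ f U) {c v : ℂ} {t : ℝ}
    (ht : c + t * v ∈ U) :
    deriv (deriv fun r : ℝ => L (f (c + r * v))) t = L (deriv (deriv f) (c + t * v) * v ^ 2) := by
  have hdiff {g : ℂ → ℂ} (hg : DifferentiableOn ℂ g U) {r : ℝ} (hr : c + r * v ∈ U) :
      HasDerivAt g (deriv g (c + r * v)) (c + r * v) :=
    (hg.differentiableAt (hU.mem_nhds hr)).hasDerivAt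
  have hnear : ∀ᶠ r : ℝ in 𝓝 t, c + r * v ∈ U :=
    (hU.preimage (by fun_prop)).mem_nhds ht
  have hfirst : deriv (fun r : ℝ => L (f (c + r * v))) =ᶠ[𝓝 t]
      fun r => L (deriv f (c + r * v) * v) :=
    hnear.mono fun r hr => (hasDerivAt_clm_comp_line L (hdiff hf hr)).deriv
  rw [hfirst.deriv_eq, sq, ← mul_assoc]
  exact (hasDerivAt_clm_comp_line L ((hdiff (hf.deriv hU) ht).mul_const v)).deriv

end Line

lemma lap_eq_zero_of_differentiableOn {f : ℂ → ℂ} {U : Set ℂ} (hU : IsOpen U)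
    (hf : DifferentiableOn ℂ f U) (L : ℂ →L[ℝ] ℝ × ℝ) {g : ℝ → ℝ → ℝ × ℝ}
    (hg : ∀ a b : ℝ, (a + b * I : ℂ) ∈ U → g a b = L (f (a + b * I))) {x y : ℝ}
    (hxy : (x + y * I : ℂ) ∈ U) :
    lap g x y = 0 := by
  have hx : (fun r => g r y) =ᶠ[𝓝 x] fun r : ℝ => L (f (y * I + r * 1)) := by
    have hnear : ∀ᶠ r : ℝ in 𝓝 x, (r + y * I : ℂ) ∈ U :=
      (hU.preimage (f := fun r : ℝ => (r + y * I : ℂ)) (by fun_prop)).mem_nhds hxy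
    exact hnear.mono fun r hr => by simp only [hg r y hr, add_comm, mul_one]
  have hy : (fun r => g x r) =ᶠ[𝓝 y] fun r : ℝ => L (f (x + r * I)) :=
    eventually_of_mem ((hU.preimage (f := fun r : ℝ => (x + r * I : ℂ)) (by fun_prop)).mem_nhds hxy)
      fun r hr => hg x r hr
  have hxy' : (y * I + x * 1 : ℂ) ∈ U := by rwa [add_comm, mul_one]
  change deriv (deriv fun r => g r y) x + deriv (deriv fun r => g x r) y = 0
  rw [hx.deriv.deriv_eq, hy.deriv.deriv_eq, deriv_deriv_clm_comp_line L hU hf hxy',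
    deriv_deriv_clm_comp_line L hU hf hxy, ← map_add, add_comm (y * I : ℂ), mul_one, I_sq]
  simp

lemma sq_add_add_one_sq_ne_zero {a b : ℝ} (h : (a + b * I : ℂ) + I ≠ 0) :
    a ^ 2 + (b + 1) ^ 2 ≠ 0 := by
  have hpos := normSq_pos.mpr h
  simp only [normSq_apply, add_re, add_im, mul_re, mul_im, ofReal_re, ofReal_im, I_re, I_im] at hpos
  nlinarith

lemma equivRealProd_div_eq_of_mul_eq {N w : ℂ} (hw : w ≠ 0) {p q : ℝ}
    (h : (p + q * I) * w = N) : equivRealProd (N / w) = (p, q) := by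
  rw [← h, mul_div_cancel_right₀ _ hw]
  simp

lemma Z1_eq_equivRealProd {a b : ℝ} (h : (a + b * I : ℂ) + I ≠ 0) :
    Z1 a b = equivRealProd ((I - (a + b * I)) / (a + b * I + I)) := by
  have hab := sq_add_add_one_sq_ne_zero h
  refine (equivRealProd_div_eq_of_mul_eq h ?_).symm
  apply Complex.ext <;>
    simp only [add_re, add_im, sub_re, sub_im, mul_re, mul_im, ofReal_re, ofReal_im, I_re, I_im] <;>
    field_simp <;> ring

lemma Z2_eq_equivRealProd {a b : ℝ} (h : (a + b * I : ℂ) + I ≠ 0) :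
    Z2 a b = equivRealProd (2 / (a + b * I + I) ^ 2) := by
  have hab := sq_add_add_one_sq_ne_zero h
  refine (equivRealProd_div_eq_of_mul_eq (pow_ne_zero 2 h) ?_).symm
  apply Complex.ext <;>
    simp only [sq, add_re, add_im, mul_re, mul_im, ofReal_re, ofReal_im, I_re, I_im, re_ofNat,
      im_ofNat] <;>
    field_simp <;> ring

lemma Z3_eq_equivRealProd {a b : ℝ} (h : (a + b * I : ℂ) + I ≠ 0) :
    Z3 a b = equivRealProd (2 * (a + b * I) / (a + b * I + I) ^ 2) := by
  have hab := sq_add_add_one_sq_ne_zero h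
  refine (equivRealProd_div_eq_of_mul_eq (pow_ne_zero 2 h) ?_).symm
  apply Complex.ext <;>
    simp only [sq, add_re, add_im, mul_re, mul_im, ofReal_re, ofReal_im, I_re, I_im, re_ofNat,
      im_ofNat] <;>
    field_simp <;> ring

/-- the maps `Z₁`, `Z₂`, `Z₃` are harmonic on the open upper half-plane. -/
theorem Z_harmonic :
    ∀ x y : ℝ, 0 < y →
      lap Z1 x y = 0 ∧ lap Z2 x y = 0 ∧ lap Z3 x y = 0 := by
  intro x y hy
  have hU : IsOpen {z : ℂ | z + I ≠ 0} := isOpen_ne_fun (by fun_prop) continuous_const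
  have hxy : (x + y * I : ℂ) + I ≠ 0 := fun h => by
    linarith [show y + 1 = 0 by simpa using congrArg im h]
  refine ⟨?_, ?_, ?_⟩
  · refine lap_eq_zero_of_differentiableOn (f := fun z => (I - z) / (z + I)) hU ?_
      equivRealProdCLM (fun a b h => Z1_eq_equivRealProd h) hxy
    fun_prop (disch := exact fun z hz => hz)
  · refine lap_eq_zero_of_differentiableOn (f := fun z => 2 / (z + I) ^ 2) hU ?_
      equivRealProdCLM (fun a b h => Z2_eq_equivRealProd h) hxy
    fun_prop (disch := exact fun z hz => pow_ne_zero 2 hz)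
  · refine lap_eq_zero_of_differentiableOn (f := fun z => 2 * z / (z + I) ^ 2) hU ?_
      equivRealProdCLM (fun a b h => Z3_eq_equivRealProd h) hxy
    fun_prop (disch := exact fun z hz => pow_ne_zero 2 hz)
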